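/- For a finite simple graph G = (V,E), the value (−1)^{|V|} χ_G(−1) equals the number of acyclic orientations of G. -/

import Mathlib

open SimpleGraph Polynomial

/-- Number of proper colorings of `G` with `k` colors. -/
noncomputable def properColoringCount {V : Type*} (G : SimpleGraph V) (k : ℕ) : ℕ :=
  Nat.card {f : V → Fin k // ∀ u v, G.Adj u v → f u ≠ f v}

/-- `P` is the chromatic polynomial of `G`. -/
def IsChromaticPoly {V : Type*} (G : SimpleGraph V) (P : Polynomial ℤ) : Prop :=
  ∀ k : ℕ, P.eval (k : ℤ) = properColoringCount G k

/-- `r` is an orientation of the simple graph `G`: every directed edge lies over an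
edge of `G`, and every edge of `G` gets exactly one of its two directions. -/
def IsOrientation {V : Type*} (G : SimpleGraph V) (r : V → V → Prop) : Prop :=
  (∀ u v, r u v → G.Adj u v) ∧ (∀ u v, G.Adj u v → (r u v ↔ ¬ r v u))

/-- A directed relation is acyclic if it has no directed cycles. -/
def IsAcyclicRel {V : Type*} (r : V → V → Prop) : Prop :=
  ∀ v, ¬ Relation.TransGen r v v

/-- The number of acyclic orientations of `G`. -/
noncomputable def acyclicOrientationCount {V : Type*} (G : SimpleGraph V) : ℕ :=
  Nat.card {r : V → V → Prop // IsOrientation G r ∧ IsAcyclicRel r}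

/-! Deletion–contraction. For an edge `uv`, the colourings of `G ∖ uv` are those of `G` together
with those giving `u` and `v` the same colour, which are the colourings of `G / uv`; so
`χ_{G∖uv} = χ_G + χ_{G/uv}`. An acyclic orientation of `G` restricts to one of `G ∖ uv`, and an
acyclic orientation `σ` of `G ∖ uv` extends to `G` in two ways when `σ` has no directed path
between `u` and `v`, and in exactly one way otherwise; the `σ` without such a path are the pullbacks
of the acyclic orientations of `G / uv`. Hence `a(G) = a(G ∖ uv) + a(G / uv)`, and as `G / uv` has
one vertex fewer, `(-1)^|V| χ_G(-1)` satisfies the same recursion; both equal `1` on edgeless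
graphs. -/

open Relation

namespace Relation

variable {α β : Type*} {r : α → α → Prop} {a b u v : α}

theorem TransGen.split_arrow {x y : α} (h : TransGen (fun p q => r p q ∨ (p = a ∧ q = b)) x y) :
    TransGen r x y ∨ (ReflTransGen r x a ∧ ReflTransGen r b y) := by
  induction h with
  | single h =>
    rcases h with h | ⟨rfl, rfl⟩
    · exact .inl (.single h)
    · exact .inr ⟨.refl, .refl⟩
  | tail _ h ih =>
    rcases h with h | ⟨rfl, rfl⟩
    · exact ih.imp (·.tail h) fun ⟨hxa, hby⟩ => ⟨hxa, hby.tail h⟩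
    · exact .inr ⟨ih.elim TransGen.to_reflTransGen And.left, .refl⟩

-- A path in the quotient lifts to a path that jumps across the fibre `{u, v}` at most once.
theorem reflTransGen_map_lift {ρ : α → β} (hρ : ∀ x y, ρ x = ρ y → x = y ∨ s(x, y) = s(u, v))
    {x y : α} (h : ReflTransGen (Relation.Map r ρ ρ) (ρ x) (ρ y)) :
    ReflTransGen r x y ∨ (ReflTransGen r x u ∧ ReflTransGen r v y) ∨
      (ReflTransGen r x v ∧ ReflTransGen r u y) := by
  have fibre_step : ∀ {y z}, ρ y = ρ z →
      ReflTransGen r x y ∨ (ReflTransGen r x u ∧ ReflTransGen r v y) ∨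
        (ReflTransGen r x v ∧ ReflTransGen r u y) →
      ReflTransGen r x z ∨ (ReflTransGen r x u ∧ ReflTransGen r v z) ∨
        (ReflTransGen r x v ∧ ReflTransGen r u z) := by
    intro y z hyz hy
    rcases hρ y z hyz with rfl | hyz
    · exact hy
    rcases Sym2.eq_iff.mp hyz with ⟨rfl, rfl⟩ | ⟨rfl, rfl⟩
    · rcases hy with hy | hy | hy
      · exact .inr (.inl ⟨hy, .refl⟩)
      · exact .inr (.inl ⟨hy.1, .refl⟩)
      · exact .inl hy.1
    · rcases hy with hy | hy | hy
      · exact .inr (.inr ⟨hy, .refl⟩)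
      · exact .inl hy.1
      · exact .inr (.inr ⟨hy.1, .refl⟩)
  generalize hb : ρ y = b at h
  induction h generalizing y with
  | refl => exact fibre_step hb.symm (.inl .refl)
  | tail _ hcd ih =>
    obtain ⟨c, d, hcd, rfl, rfl⟩ := hcd
    refine fibre_step hb.symm ?_
    exact (ih rfl).imp (·.tail hcd) (Or.imp (And.imp_right (·.tail hcd))
      (And.imp_right (·.tail hcd)))

end Relation

section Acyclic

variable {α β : Type*} {r s : α → α → Prop} {a b u v : α}

theorem IsAcyclicRel.mono (hr : IsAcyclicRel r) (hsr : s ≤ r) : IsAcyclicRel s :=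
  fun x hx => hr x (TransGen.mono hsr _ _ hx)

theorem isAcyclicRel_arrow_iff :
    IsAcyclicRel (fun p q => r p q ∨ (p = a ∧ q = b)) ↔ IsAcyclicRel r ∧ ¬ ReflTransGen r b a := by
  constructor
  · intro h
    refine ⟨h.mono fun p q => Or.inl, fun hba => h a (.head' (.inr ⟨rfl, rfl⟩) ?_)⟩
    exact ReflTransGen.mono (fun p q => Or.inl) _ _ hba
  · rintro ⟨hr, hba⟩ x hx
    rcases hx.split_arrow with hx | ⟨hxa, hbx⟩
    · exact hr x hx
    · exact hba (hbx.trans hxa)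

theorem isAcyclicRel_map_iff {ρ : α → β} (huv : u ≠ v) (hρ : ∀ x y, ρ x = ρ y ↔ x = y ∨ s(x, y) = s(u, v)) :
    IsAcyclicRel (Relation.Map r ρ ρ) ↔
      IsAcyclicRel r ∧ ¬ ReflTransGen r u v ∧ ¬ ReflTransGen r v u := by
  have lift : ∀ {x y}, TransGen r x y → TransGen (Relation.Map r ρ ρ) (ρ x) (ρ y) :=
    fun h => TransGen.lift ρ (fun p q hpq => ⟨p, q, hpq, rfl, rfl⟩) _ _ h
  have hρuv : ρ u = ρ v := (hρ u v).mpr (.inr rfl)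
  constructor
  · intro h
    refine ⟨fun x hx => h _ (lift hx), fun huv' => ?_, fun hvu => ?_⟩
    · have := lift ((reflTransGen_iff_eq_or_transGen.mp huv').resolve_left huv.symm)
      exact h (ρ u) (hρuv ▸ this)
    · have := lift ((reflTransGen_iff_eq_or_transGen.mp hvu).resolve_left huv)
      exact h (ρ u) (hρuv ▸ this)
  · rintro ⟨hr, hnuv, hnvu⟩ a ha
    obtain ⟨_, ⟨x, y, hxy, rfl, rfl⟩, hyx⟩ := TransGen.head'_iff.mp ha
    rcases reflTransGen_map_lift (fun p q => (hρ p q).mp) hyx with hyx | ⟨hyu, hvx⟩ | ⟨hyv, hux⟩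
    · exact hr x (.head' hxy hyx)
    · exact hnvu (hvx.trans (.head hxy hyu))
    · exact hnuv (hux.trans (.head hxy hyv))

end Acyclic

namespace IsOrientation

variable {V : Type*} {G : SimpleGraph V} {r s : V → V → Prop}

theorem total (hr : IsOrientation G r) {x y : V} (hxy : G.Adj x y) : r x y ∨ r y x :=
  (em (r y x)).symm.imp (hr.2 x y hxy).mpr id

theorem of_isAcyclicRel (hle : ∀ x y, r x y → G.Adj x y) (htot : ∀ x y, G.Adj x y → r x y ∨ r y x)
    (hr : IsAcyclicRel r) : IsOrientation G r :=
  ⟨hle, fun x y hxy => ⟨fun h h' => hr x (.head h (.single h')), (htot x y hxy).resolve_right⟩⟩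

theorem eq_of_le (hr : IsOrientation G r) (hs : IsOrientation G s) (hrs : r ≤ s) : r = s := by
  funext x y
  refine propext ⟨hrs x y, fun hxy => ?_⟩
  have hxy' := hs.1 x y hxy
  exact (hr.total hxy').resolve_right fun hyx => (hs.2 x y hxy').mp hxy (hrs y x hyx)

end IsOrientation

theorem IsChromaticPoly.unique {V : Type*} {G : SimpleGraph V} {P Q : ℤ[X]}
    (hP : IsChromaticPoly G P) (hQ : IsChromaticPoly G Q) : P = Q := by
  refine eq_of_infinite_eval_eq P Q ((Set.infinite_range_of_injective Nat.cast_injective).mono ?_)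
  rintro _ ⟨k, rfl⟩
  exact (hP k).trans (hQ k).symm

universe u

namespace SimpleGraph

variable {V W : Type*} {G : SimpleGraph V} {u v : V}

def acyclicOrientations (G : SimpleGraph V) : Set (V → V → Prop) :=
  {r | IsOrientation G r ∧ IsAcyclicRel r}

theorem acyclicOrientationCount_eq_ncard :
    acyclicOrientationCount G = (acyclicOrientations G).ncard :=
  Nat.card_coe_set_eq _

theorem deleteEdges_adj_iff {x y : V} :
    (G.deleteEdges {s(u, v)}).Adj x y ↔ G.Adj x y ∧ s(x, y) ≠ s(u, v) := by
  simp [deleteEdges_adj]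

theorem bijOn_restrict_acyclicOrientations (huv : G.Adj u v) :
    Set.BijOn (fun r x y => r x y ∧ (G.deleteEdges {s(u, v)}).Adj x y)
      (G.acyclicOrientations ∩ {r | r u v})
      ((G.deleteEdges {s(u, v)}).acyclicOrientations ∩ {σ | ¬ ReflTransGen σ v u}) := by
  set H := G.deleteEdges {s(u, v)}
  have maps_restrict : Set.MapsTo (fun r x y => r x y ∧ H.Adj x y)
      (G.acyclicOrientations ∩ {r | r u v}) (H.acyclicOrientations ∩ {σ | ¬ ReflTransGen σ v u}) := by
    rintro r ⟨⟨hor, hac⟩, hruv⟩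
    have hle : (fun x y => r x y ∧ H.Adj x y) ≤ r := fun x y h => h.1
    have hac' := hac.mono hle
    refine ⟨⟨.of_isAcyclicRel (fun x y h => h.2) (fun x y hxy => ?_) hac', hac'⟩, ?_⟩
    · exact (hor.total (deleteEdges_adj_iff.mp hxy).1).imp (⟨·, hxy⟩) (⟨·, hxy.symm⟩)
    · exact fun hvu => hac u (.head' hruv (ReflTransGen.mono hle _ _ hvu))
  have maps_extend : Set.MapsTo (fun σ x y => σ x y ∨ (x = u ∧ y = v))
      (H.acyclicOrientations ∩ {σ | ¬ ReflTransGen σ v u}) (G.acyclicOrientations ∩ {r | r u v}) := by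
    rintro σ ⟨⟨hor, hac⟩, hvu⟩
    have hac' := isAcyclicRel_arrow_iff.mpr ⟨hac, hvu⟩
    refine ⟨⟨.of_isAcyclicRel ?_ (fun x y hxy => ?_) hac', hac'⟩, .inr ⟨rfl, rfl⟩⟩
    · rintro x y (h | ⟨rfl, rfl⟩)
      · exact (deleteEdges_adj_iff.mp (hor.1 x y h)).1
      · exact huv
    · by_cases he : s(x, y) = s(u, v)
      · rcases Sym2.eq_iff.mp he with ⟨rfl, rfl⟩ | ⟨rfl, rfl⟩
        · exact .inl (.inr ⟨rfl, rfl⟩)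
        · exact .inr (.inr ⟨rfl, rfl⟩)
      · exact (hor.total (deleteEdges_adj_iff.mpr ⟨hxy, he⟩)).imp .inl .inl
  refine Set.InvOn.bijOn ⟨fun r hr => ?_, fun σ hσ => ?_⟩ maps_restrict maps_extend
  · exact (maps_extend (maps_restrict hr)).1.1.eq_of_le hr.1.1
      fun x y => Or.rec And.left fun ⟨hx, hy⟩ => hx ▸ hy ▸ hr.2
  · exact (hσ.1.1.eq_of_le (maps_restrict (maps_extend hσ)).1.1
      fun x y h => ⟨.inl h, hσ.1.1.1 x y h⟩).symm

theorem ncard_acyclicOrientations_eq_deleteEdges_add [Finite V] (huv : G.Adj u v) :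
    G.acyclicOrientations.ncard = (G.deleteEdges {s(u, v)}).acyclicOrientations.ncard +
      ((G.deleteEdges {s(u, v)}).acyclicOrientations ∩
        {σ | ¬ ReflTransGen σ u v ∧ ¬ ReflTransGen σ v u}).ncard := by
  set H := G.deleteEdges {s(u, v)}
  have split : G.acyclicOrientations =
      (G.acyclicOrientations ∩ {r | r u v}) ∪ (G.acyclicOrientations ∩ {r | r v u}) := by
    rw [← Set.inter_union_distrib_left, Set.left_eq_inter]
    exact fun r hr => hr.1.total huv
  have disjoint : Disjoint (G.acyclicOrientations ∩ {r | r u v})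
      (G.acyclicOrientations ∩ {r | r v u}) :=
    Set.disjoint_left.mpr fun r hr hr' => (hr.1.1.2 u v huv).mp hr.2 hr'.2
  have hvu : (G.acyclicOrientations ∩ {r | r v u}).ncard =
      (H.acyclicOrientations ∩ {σ | ¬ ReflTransGen σ u v}).ncard := by
    have := (bijOn_restrict_acyclicOrientations huv.symm).ncard_eq
    rwa [Sym2.eq_swap] at this
  have cover : (H.acyclicOrientations ∩ {σ | ¬ ReflTransGen σ v u}) ∪
      (H.acyclicOrientations ∩ {σ | ¬ ReflTransGen σ u v}) = H.acyclicOrientations := by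
    rw [← Set.inter_union_distrib_left, Set.inter_eq_left]
    refine fun σ hσ => not_and_or.mp fun ⟨hvu, huv'⟩ => hσ.2 u ?_
    exact (TransGen.trans_left
      ((reflTransGen_iff_eq_or_transGen.mp huv').resolve_left huv.ne.symm) hvu)
  calc G.acyclicOrientations.ncard
      = (G.acyclicOrientations ∩ {r | r u v}).ncard +
          (G.acyclicOrientations ∩ {r | r v u}).ncard := by
        rw [← Set.ncard_union_eq disjoint, ← split]
    _ = (H.acyclicOrientations ∩ {σ | ¬ ReflTransGen σ v u}).ncard +
          (H.acyclicOrientations ∩ {σ | ¬ ReflTransGen σ u v}).ncard := by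
        rw [(bijOn_restrict_acyclicOrientations huv).ncard_eq, hvu]
    _ = _ := by
        rw [← Set.ncard_union_add_ncard_inter, cover, ← Set.inter_inter_distrib_left,
          Set.inter_comm {σ | ¬ ReflTransGen σ v u}, ← Set.ofPred_and]

-- When `ρ` identifies exactly `u` and `v`, `G.map ρ` is the contraction `G / uv`.
variable {ρ : V → W}

theorem map_ne_of_deleteEdges_adj (hρ : ∀ x y, ρ x = ρ y ↔ x = y ∨ s(x, y) = s(u, v)) {x y : V}
    (h : (G.deleteEdges {s(u, v)}).Adj x y) : ρ x ≠ ρ y :=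
  fun he => ((hρ x y).mp he).elim h.ne (deleteEdges_adj_iff.mp h).2

theorem map_adj_iff_deleteEdges (hρ : ∀ x y, ρ x = ρ y ↔ x = y ∨ s(x, y) = s(u, v)) {a b : W} :
    (G.map ρ).Adj a b ↔ Relation.Map (G.deleteEdges {s(u, v)}).Adj ρ ρ a b := by
  constructor
  · rintro ⟨hab, x, y, hxy, rfl, rfl⟩
    exact ⟨x, y, deleteEdges_adj_iff.mpr ⟨hxy, fun he => hab ((hρ x y).mpr (.inr he))⟩, rfl, rfl⟩
  · rintro ⟨x, y, hxy, rfl, rfl⟩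
    exact ⟨map_ne_of_deleteEdges_adj hρ hxy, x, y, (deleteEdges_adj_iff.mp hxy).1, rfl, rfl⟩

theorem bijOn_map_acyclicOrientations (huv : u ≠ v)
    (hρ : ∀ x y, ρ x = ρ y ↔ x = y ∨ s(x, y) = s(u, v)) :
    Set.BijOn (fun σ => Relation.Map σ ρ ρ)
      ((G.deleteEdges {s(u, v)}).acyclicOrientations ∩
        {σ | ¬ ReflTransGen σ u v ∧ ¬ ReflTransGen σ v u})
      (G.map ρ).acyclicOrientations := by
  set H := G.deleteEdges {s(u, v)}
  have map_pull (τ : W → W → Prop) (hτ : τ ≤ (G.map ρ).Adj) :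
      Relation.Map (fun x y => H.Adj x y ∧ τ (ρ x) (ρ y)) ρ ρ = τ := by
    funext a b
    refine propext ⟨fun ⟨x, y, ⟨_, h⟩, hx, hy⟩ => hx ▸ hy ▸ h, fun h => ?_⟩
    obtain ⟨x, y, hxy, rfl, rfl⟩ := (map_adj_iff_deleteEdges hρ).mp (hτ a b h)
    exact ⟨x, y, ⟨hxy, h⟩, rfl, rfl⟩
  have maps_pull : Set.MapsTo (fun τ x y => H.Adj x y ∧ τ (ρ x) (ρ y))
      (G.map ρ).acyclicOrientations
      (H.acyclicOrientations ∩ {σ | ¬ ReflTransGen σ u v ∧ ¬ ReflTransGen σ v u}) := by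
    rintro τ ⟨hor, hac⟩
    have hac' := (isAcyclicRel_map_iff huv hρ).mp ((map_pull τ hor.1).symm ▸ hac)
    refine ⟨⟨.of_isAcyclicRel (fun x y h => h.1) (fun x y hxy => ?_) hac'.1, hac'.1⟩, hac'.2⟩
    exact (hor.total ((map_adj_iff_deleteEdges hρ).mpr ⟨x, y, hxy, rfl, rfl⟩)).imp
      (⟨hxy, ·⟩) (⟨hxy.symm, ·⟩)
  have maps_push : Set.MapsTo (fun σ => Relation.Map σ ρ ρ)
      (H.acyclicOrientations ∩ {σ | ¬ ReflTransGen σ u v ∧ ¬ ReflTransGen σ v u})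
      (G.map ρ).acyclicOrientations := by
    rintro σ ⟨⟨hor, hac⟩, hnp⟩
    have hac' := (isAcyclicRel_map_iff huv hρ).mpr ⟨hac, hnp⟩
    refine ⟨.of_isAcyclicRel ?_ (fun a b hab => ?_) hac', hac'⟩
    · rintro _ _ ⟨x, y, h, rfl, rfl⟩
      exact (map_adj_iff_deleteEdges hρ).mpr ⟨x, y, hor.1 x y h, rfl, rfl⟩
    · obtain ⟨x, y, hxy, rfl, rfl⟩ := (map_adj_iff_deleteEdges hρ).mp hab
      exact (hor.total hxy).imp (⟨x, y, ·, rfl, rfl⟩) (⟨y, x, ·, rfl, rfl⟩)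
  refine Set.InvOn.bijOn ⟨fun σ hσ => ?_, fun τ hτ => map_pull τ hτ.1.1⟩ maps_push maps_pull
  exact (hσ.1.1.eq_of_le (maps_pull (maps_push hσ)).1.1
    fun x y h => ⟨hσ.1.1.1 x y h, x, y, h, rfl, rfl⟩).symm

theorem acyclicOrientationCount_eq_deleteEdges_add_map [Finite V] (huv : G.Adj u v)
    (hρ : ∀ x y, ρ x = ρ y ↔ x = y ∨ s(x, y) = s(u, v)) :
    acyclicOrientationCount G =
      acyclicOrientationCount (G.deleteEdges {s(u, v)}) + acyclicOrientationCount (G.map ρ) := by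
  simp only [acyclicOrientationCount_eq_ncard]
  rw [ncard_acyclicOrientations_eq_deleteEdges_add huv,
    (bijOn_map_acyclicOrientations huv.ne hρ).ncard_eq]

section Coloring

variable {α : Type*}

def properColorings (G : SimpleGraph V) (α : Type*) : Set (V → α) :=
  {f | ∀ x y, G.Adj x y → f x ≠ f y}

theorem properColoringCount_eq_ncard (k : ℕ) :
    properColoringCount G k = (G.properColorings (Fin k)).ncard :=
  Nat.card_coe_set_eq _

theorem properColorings_deleteEdges_eq (huv : G.Adj u v) :
    (G.deleteEdges {s(u, v)}).properColorings α =
      G.properColorings α ∪ ((G.deleteEdges {s(u, v)}).properColorings α ∩ {f | f u = f v}) := by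
  ext f
  refine ⟨fun hf => ?_, ?_⟩
  · refine (em (f u = f v)).symm.imp (fun hne x y hxy => ?_) (⟨hf, ·⟩)
    by_cases he : s(x, y) = s(u, v)
    · rcases Sym2.eq_iff.mp he with ⟨rfl, rfl⟩ | ⟨rfl, rfl⟩
      exacts [hne, Ne.symm hne]
    · exact hf x y (deleteEdges_adj_iff.mpr ⟨hxy, he⟩)
  · rintro (hf | hf)
    exacts [fun x y hxy => hf x y (deleteEdges_adj_iff.mp hxy).1, hf.1]

theorem bijOn_comp_properColorings (hρs : Function.Surjective ρ)
    (hρ : ∀ x y, ρ x = ρ y ↔ x = y ∨ s(x, y) = s(u, v)) :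
    Set.BijOn (· ∘ ρ) ((G.map ρ).properColorings α)
      ((G.deleteEdges {s(u, v)}).properColorings α ∩ {f | f u = f v}) := by
  refine ⟨fun g hg => ⟨fun x y hxy => ?_, congrArg g ((hρ u v).mpr (.inr rfl))⟩,
    hρs.injective_comp_right.injOn, fun f ⟨hf, hfuv⟩ => ?_⟩
  · exact hg _ _ ((map_adj_iff_deleteEdges hρ).mpr ⟨x, y, hxy, rfl, rfl⟩)
  have hconst : ∀ x y, ρ x = ρ y → f x = f y := by
    intro x y hxy
    rcases (hρ x y).mp hxy with rfl | he
    · rfl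
    · rcases Sym2.eq_iff.mp he with ⟨rfl, rfl⟩ | ⟨rfl, rfl⟩
      exacts [hfuv, hfuv.symm]
  have hfactor : f ∘ Function.surjInv hρs ∘ ρ = f :=
    funext fun x => hconst _ _ (Function.surjInv_eq hρs (ρ x))
  refine ⟨f ∘ Function.surjInv hρs, fun a b hab => ?_, hfactor⟩
  obtain ⟨x, y, hxy, rfl, rfl⟩ := (map_adj_iff_deleteEdges hρ).mp hab
  exact (congrFun hfactor x).trans_ne ((hf x y hxy).trans_eq (congrFun hfactor y).symm)

theorem properColoringCount_deleteEdges [Finite V] (huv : G.Adj u v)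
    (hρs : Function.Surjective ρ) (hρ : ∀ x y, ρ x = ρ y ↔ x = y ∨ s(x, y) = s(u, v)) (k : ℕ) :
    properColoringCount (G.deleteEdges {s(u, v)}) k =
      properColoringCount G k + properColoringCount (G.map ρ) k := by
  have disjoint : Disjoint (G.properColorings (Fin k))
      ((G.deleteEdges {s(u, v)}).properColorings (Fin k) ∩ {f | f u = f v}) :=
    Set.disjoint_left.mpr fun f hf hf' => hf u v huv hf'.2
  simp only [properColoringCount_eq_ncard]
  rw [properColorings_deleteEdges_eq huv, Set.ncard_union_eq disjoint,
    (bijOn_comp_properColorings hρs hρ).ncard_eq]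

end Coloring

theorem isChromaticPoly_bot [Finite V] : IsChromaticPoly (⊥ : SimpleGraph V) (X ^ Nat.card V) := by
  intro k
  have : (⊥ : SimpleGraph V).properColorings (Fin k) = Set.univ :=
    Set.eq_univ_of_forall fun f x y h => h.elim
  rw [properColoringCount_eq_ncard, this, Set.ncard_univ, Nat.card_fun, Nat.card_fin, eval_pow,
    eval_X, Nat.cast_pow]

theorem acyclicOrientationCount_bot : acyclicOrientationCount (⊥ : SimpleGraph V) = 1 := by
  have hempty : IsAcyclicRel (fun _ _ : V => False) := fun x hx => by
    obtain ⟨_, h, _⟩ := TransGen.head'_iff.mp hx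
    exact h
  have : (⊥ : SimpleGraph V).acyclicOrientations = {fun _ _ => False} := by
    ext r
    refine ⟨fun hr => funext₂ fun x y => propext ⟨fun h => hr.1.1 x y h, False.elim⟩, ?_⟩
    rintro rfl
    exact ⟨.of_isAcyclicRel (fun _ _ => False.elim) (fun _ _ => False.elim) hempty, hempty⟩
  rw [acyclicOrientationCount_eq_ncard, this, Set.ncard_singleton]

theorem ncard_edgeSet_deleteEdges_lt [Finite V] (huv : G.Adj u v) :
    (G.deleteEdges {s(u, v)}).edgeSet.ncard < G.edgeSet.ncard := by
  rw [edgeSet_deleteEdges]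
  exact Set.ncard_sdiff_singleton_lt_of_mem huv

theorem ncard_edgeSet_map_lt [Finite V] (huv : G.Adj u v)
    (hρ : ∀ x y, ρ x = ρ y ↔ x = y ∨ s(x, y) = s(u, v)) :
    (G.map ρ).edgeSet.ncard < G.edgeSet.ncard := by
  have hsub : (G.map ρ).edgeSet ⊆ Sym2.map ρ '' (G.deleteEdges {s(u, v)}).edgeSet := by
    intro e he
    induction e using Sym2.ind with
    | _ a b =>
      obtain ⟨x, y, hxy, rfl, rfl⟩ := (map_adj_iff_deleteEdges hρ).mp he
      exact ⟨s(x, y), hxy, rfl⟩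
  calc (G.map ρ).edgeSet.ncard
      ≤ (Sym2.map ρ '' (G.deleteEdges {s(u, v)}).edgeSet).ncard :=
        Set.ncard_le_ncard hsub ((Set.toFinite _).image _)
    _ ≤ (G.deleteEdges {s(u, v)}).edgeSet.ncard := Set.ncard_image_le
    _ < G.edgeSet.ncard := ncard_edgeSet_deleteEdges_lt huv

theorem exists_surjective_merging (huv : u ≠ v) :
    ∃ ρ : V → {x // x ≠ v}, Function.Surjective ρ ∧
      ∀ x y, ρ x = ρ y ↔ x = y ∨ s(x, y) = s(u, v) := by
  classical
  refine ⟨fun x => if h : x = v then ⟨u, huv⟩ else ⟨x, h⟩, fun a => ⟨a, dif_neg a.2⟩, fun x y => ?_⟩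
  by_cases hx : x = v <;> by_cases hy : y = v <;> simp [hx, hy]
  all_goals grind

theorem exists_isChromaticPoly_eval_neg_one {V : Type u} [Finite V]
    (G : SimpleGraph V) :
    ∃ P : ℤ[X], IsChromaticPoly G P ∧ (-1) ^ Nat.card V * P.eval (-1) = acyclicOrientationCount G := by
  induction hn : G.edgeSet.ncard using Nat.strong_induction_on generalizing V with
  | _ n ih =>
  rcases eq_or_ne G ⊥ with rfl | hG
  · refine ⟨X ^ Nat.card V, isChromaticPoly_bot, ?_⟩
    rw [acyclicOrientationCount_bot, eval_pow, eval_X, ← mul_pow]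
    norm_num
  obtain ⟨u, v, huv⟩ := ne_bot_iff_exists_adj.mp hG
  obtain ⟨ρ, hρs, hρ⟩ := exists_surjective_merging huv.ne
  have hcard : Nat.card V = Nat.card {x // x ≠ v} + 1 := by
    have := Set.ncard_compl_add_ncard ({v} : Set V)
    rw [Set.ncard_singleton] at this
    exact this.symm
  obtain ⟨Pd, hPd, hd⟩ := ih _ (hn ▸ ncard_edgeSet_deleteEdges_lt huv) (G.deleteEdges {s(u, v)}) rfl
  obtain ⟨Pc, hPc, hc⟩ := ih _ (hn ▸ ncard_edgeSet_map_lt huv hρ) (G.map ρ) rfl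
  refine ⟨Pd - Pc, fun k => ?_, ?_⟩
  · rw [eval_sub, hPd k, hPc k, properColoringCount_deleteEdges huv hρs hρ k]
    push_cast
    ring
  · rw [acyclicOrientationCount_eq_deleteEdges_add_map huv hρ, eval_sub]
    push_cast
    rw [← hd, ← hc, hcard]
    ring

end SimpleGraph

theorem neg_one_eval_eq_acyclicOrientationCount {V : Type*} [Fintype V]
    (G : SimpleGraph V) (P : Polynomial ℤ) (hP : IsChromaticPoly G P) :
    (-1 : ℤ) ^ (Fintype.card V) * P.eval (-1) = acyclicOrientationCount G := by
  obtain ⟨Q, hQ, hQ_eval⟩ := G.exists_isChromaticPoly_eval_neg_one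
  rw [hP.unique hQ, Fintype.card_eq_nat_card, hQ_eval]
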